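/- Draining-time positivity: let h̄ ≥ 0 be the cell average depth, H₊ and H₋ the numerical fluxes at the right and left interfaces, Δt^drain := Δx·h̄ / (max(0,H₊) + max(0,−H₋)) (interpreted as +∞ when the denominator is 0), and Δt₊ := min(Δt, Δt^drain_i₊), Δt₋ := min(Δt, Δt^drain_i₋) effective interface time steps satisfying Δt₊ = min(Δt, Δt^drain) whenever H₊ > 0 and Δt₋ = min(Δt, Δt^drain) whenever H₋ < 0. Then the update h^{n+1} = h̄ − (Δt₊·H₊ − Δt₋·H₋)/Δx satisfies h^{n+1} ≥ 0, provided Δt₊ ≤ Δt and Δt₋ ≤ Δt. -/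

import Mathlib

/-! Only the outgoing fluxes can lower the depth, and each outgoing interface uses a time step
at most the draining time `Δx * hbar / D`, where `D` is the total outgoing flux. Hence the total
outflow over the step is at most `Δx * hbar`, the mass initially in the cell. -/

lemma mul_le_mul_max_zero_of_pos_imp {τ d H : ℝ} (hτ : 0 ≤ τ) (hout : 0 < H → τ ≤ d) :
    τ * H ≤ d * max 0 H := by
  rcases le_or_gt H 0 with hH | hH
  · rw [max_eq_left hH, mul_zero]
    exact mul_nonpos_of_nonneg_of_nonpos hτ hH
  · rw [max_eq_right hH.le]
    exact mul_le_mul_of_nonneg_right (hout hH) hH.le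

lemma mul_le_of_imp_eq_div {d D a : ℝ} (hD : 0 ≤ D) (ha : 0 ≤ a) (hd : 0 < D → d = a / D) :
    d * D ≤ a := by
  rcases hD.eq_or_lt with rfl | hD
  · simpa using ha
  · rw [hd hD, div_mul_cancel₀ a hD.ne']

theorem stmt5_general (Δx Δt hbar Hp Hm Δtp Δtm Δtdrain : ℝ)
    (hΔx : 0 < Δx) (hh : 0 ≤ hbar)
    (hdrain : 0 < max 0 Hp + max 0 (-Hm) →
      Δtdrain = Δx * hbar / (max 0 Hp + max 0 (-Hm)))
    (hΔtp0 : 0 ≤ Δtp) (hΔtm0 : 0 ≤ Δtm)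
    (houtp : 0 < Hp → Δtp = min Δt Δtdrain)
    (houtm : Hm < 0 → Δtm = min Δt Δtdrain) :
    0 ≤ hbar - (Δtp * Hp - Δtm * Hm) / Δx := by
  have hright : Δtp * Hp ≤ Δtdrain * max 0 Hp :=
    mul_le_mul_max_zero_of_pos_imp hΔtp0 fun h => (houtp h).trans_le (min_le_right _ _)
  have hleft : Δtm * -Hm ≤ Δtdrain * max 0 (-Hm) :=
    mul_le_mul_max_zero_of_pos_imp hΔtm0 fun h =>
      (houtm (neg_pos.mp h)).trans_le (min_le_right _ _)
  have hmass : Δtdrain * (max 0 Hp + max 0 (-Hm)) ≤ Δx * hbar :=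
    mul_le_of_imp_eq_div (by positivity) (by positivity) hdrain
  rw [sub_nonneg, div_le_iff₀ hΔx]
  linarith

/-- Draining-time positivity: limiting the outgoing fluxes by the draining time
keeps the updated water height nonnegative. -/
theorem stmt5 (Δx Δt hbar Hp Hm Δtp Δtm Δtdrain : ℝ)
    (hΔx : 0 < Δx) (hΔt : 0 < Δt) (hh : 0 ≤ hbar)
    (hdrain : 0 < max 0 Hp + max 0 (-Hm) →
      Δtdrain = Δx * hbar / (max 0 Hp + max 0 (-Hm)))
    (hΔtp0 : 0 ≤ Δtp) (hΔtm0 : 0 ≤ Δtm)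
    (hΔtp : Δtp ≤ Δt) (hΔtm : Δtm ≤ Δt)
    (houtp : 0 < Hp → Δtp = min Δt Δtdrain)
    (houtm : Hm < 0 → Δtm = min Δt Δtdrain) :
    0 ≤ hbar - (Δtp * Hp - Δtm * Hm) / Δx :=
  stmt5_general Δx Δt hbar Hp Hm Δtp Δtm Δtdrain hΔx hh hdrain hΔtp0 hΔtm0 houtp houtm
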